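/- arXiv:2403.15570 — 8 statements merged into one kernel-verified Lean document; each statement's English description precedes it below -/
import Mathlib

section
/- Let R be a relation on a countable set S and μ, ν discrete sub-probability distributions on S with μ = Σ_i p_i·x_i. Then μ R̂ ν if and only if for every distribution μ' = Σ_i p'_i·x_i with the same support and p'_i < p_i for all i (written μ' ≪ μ), we have μ' R̂ ν. -/
open scoped ENNReal

/-!
The forward direction rescales a matching row by row by `μ' x / μ x ≤ 1`. For the converse,
apply the hypothesis to `c n • μ` with `c n ↑ 1`. The space of matchings `S → S → ℝ≥0∞` is
compact, and first countable because `S` is countable, so some subsequence of the matchings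
converges pointwise. The limit is again a matching: the column bounds pass to the limit by lower
semicontinuity of `tsum`, and the row sums pass to the limit by dominated convergence, because
each entry `m x y` is bounded by `ν y` and `ν` has finite mass.
-/

open Filter Topology MeasureTheory

/-- A discrete sub-probability distribution: total mass at most 1. -/
def SubDist {S : Type*} (μ : S → ℝ≥0∞) : Prop := ∑' x, μ x ≤ 1

/-- Probabilistic lifting of a relation via a matching (coupling). -/
def Lift {S : Type*} (R : S → S → Prop) (μ ν : S → ℝ≥0∞) : Prop :=
  ∃ m : S → S → ℝ≥0∞,
    (∀ x y, m x y ≠ 0 → R x y) ∧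
    (∀ x, (∑' y, m x y) = μ x) ∧
    (∀ y, (∑' x, m x y) ≤ ν y)

/-- `μ' ≪ μ`: same support, strictly smaller weight at every support point. -/
def Lll {S : Type*} (μ' μ : S → ℝ≥0∞) : Prop :=
  Function.support μ' = Function.support μ ∧ ∀ x, μ x ≠ 0 → μ' x < μ x

namespace ENNReal

variable {ι β : Type*}

theorem tsum_le_of_tendsto {l : Filter ι} [l.NeBot] {f : ι → β → ℝ≥0∞} {g : β → ℝ≥0∞}
    {a : ℝ≥0∞} (hfg : ∀ y, Tendsto (fun k => f k y) l (𝓝 (g y)))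
    (hle : ∀ k, ∑' y, f k y ≤ a) : ∑' y, g y ≤ a := by
  rw [ENNReal.tsum_eq_iSup_sum]
  exact iSup_le fun F => le_of_tendsto (tendsto_finsetSum F fun y _ => hfg y)
    (Eventually.of_forall fun k => (ENNReal.sum_le_tsum F).trans (hle k))

theorem tendsto_tsum_of_dominated_convergence {l : Filter ι} [l.IsCountablyGenerated]
    {f : ι → β → ℝ≥0∞} {g bound : β → ℝ≥0∞} (hbound : ∑' y, bound y ≠ ∞)
    (hle : ∀ k y, f k y ≤ bound y) (hfg : ∀ y, Tendsto (fun k => f k y) l (𝓝 (g y))) :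
    Tendsto (fun k => ∑' y, f k y) l (𝓝 (∑' y, g y)) := by
  let : MeasurableSpace β := ⊤
  have hcount : ∀ h : β → ℝ≥0∞, ∫⁻ y, h y ∂Measure.count = ∑' y, h y := fun _ =>
    lintegral_count' measurable_from_top
  simp only [← hcount] at hbound ⊢
  exact tendsto_lintegral_filter_of_dominated_convergence bound
    (Eventually.of_forall fun _ => measurable_from_top)
    (Eventually.of_forall fun k => ae_of_all _ (hle k)) hbound (ae_of_all _ hfg)

end ENNReal

section Lifting

variable {S : Type*} {R : S → S → Prop}

theorem Lll.le {μ' μ : S → ℝ≥0∞} (h : Lll μ' μ) : μ' ≤ μ := by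
  intro x
  by_cases hx : μ x = 0
  · have hx' : x ∉ Function.support μ' := h.1 ▸ Function.notMem_support.2 hx
    simp [Function.notMem_support.1 hx', hx]
  · exact (h.2 x hx).le

theorem Lll.const_mul {μ : S → ℝ≥0∞} (hμ : ∀ x, μ x ≠ ∞) {c : ℝ≥0∞} (hc0 : c ≠ 0)
    (hc1 : c < 1) : Lll (fun x => c * μ x) μ := by
  refine ⟨?_, fun x hx => ?_⟩
  · ext x
    simp [hc0]
  · simpa using ENNReal.mul_lt_mul_left hx (hμ x) hc1

theorem Lift.of_le {μ μ' ν : S → ℝ≥0∞} (h : Lift R μ ν) (hμ : ∀ x, μ x ≠ ∞) (hle : μ' ≤ μ) :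
    Lift R μ' ν := by
  obtain ⟨m, hR, hrow, hcol⟩ := h
  refine ⟨fun x y => m x y * (μ' x / μ x), fun x y hne => hR x y (left_ne_zero_of_mul hne),
    fun x => ?_, fun y => ?_⟩
  · rw [ENNReal.tsum_mul_right, hrow]
    by_cases h0 : μ x = 0
    · simp [h0, le_zero_iff.1 (h0 ▸ hle x)]
    · exact ENNReal.mul_div_cancel h0 (hμ x)
  · refine (ENNReal.tsum_le_tsum fun x => ?_).trans (hcol y)
    exact mul_le_of_le_one_right' (ENNReal.div_le_of_le_mul (by simpa using hle x))

theorem Lift.of_tendsto [Countable S] {μs : ℕ → S → ℝ≥0∞} {μ ν : S → ℝ≥0∞}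
    (hν : ∑' y, ν y ≠ ∞) (hlim : ∀ x, Tendsto (fun n => μs n x) atTop (𝓝 (μ x)))
    (hlift : ∀ n, Lift R (μs n) ν) : Lift R μ ν := by
  choose M hMR hMrow hMcol using hlift
  obtain ⟨m, -, φ, hφ, hMm⟩ := isCompact_univ.tendsto_subseq (x := M) fun _ => Set.mem_univ _
  have hpt : ∀ x y, Tendsto (fun k => M (φ k) x y) atTop (𝓝 (m x y)) := fun x y =>
    tendsto_pi_nhds.1 (tendsto_pi_nhds.1 hMm x) y
  refine ⟨m, fun x y hne => ?_, fun x => ?_,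
    fun y => ENNReal.tsum_le_of_tendsto (fun x => hpt x y) fun k => hMcol (φ k) y⟩
  · obtain ⟨k, hk⟩ := ((hpt x y).eventually (isOpen_ne.mem_nhds hne)).exists
    exact hMR (φ k) x y hk
  · have hdom : ∀ k y, M (φ k) x y ≤ ν y := fun k y =>
      (ENNReal.le_tsum x).trans (hMcol (φ k) y)
    refine tendsto_nhds_unique (ENNReal.tendsto_tsum_of_dominated_convergence hν hdom (hpt x)) ?_
    simpa only [hMrow, Function.comp_def] using (hlim x).comp hφ.tendsto_atTop

end Lifting

/-- `μ R̂ ν` holds iff it holds for every `μ' ≪ μ`. -/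
theorem stmt2 {S : Type*} [Countable S] (R : S → S → Prop)
    (μ ν : S → ℝ≥0∞) (hμ : SubDist μ) (hν : SubDist ν) :
    Lift R μ ν ↔ ∀ μ' : S → ℝ≥0∞, SubDist μ' → Lll μ' μ → Lift R μ' ν := by
  have hμfin : ∀ x, μ x ≠ ∞ := fun x =>
    ne_top_of_le_ne_top ENNReal.one_ne_top ((ENNReal.le_tsum x).trans hμ)
  refine ⟨fun h μ' _ hμ' => h.of_le hμfin hμ'.le, fun h => ?_⟩
  obtain ⟨c, -, hc, hc1⟩ := exists_seq_strictMono_tendsto' (zero_lt_one' ℝ≥0∞)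
  refine Lift.of_tendsto (μs := fun n x => c n * μ x) (ne_top_of_le_ne_top ENNReal.one_ne_top hν)
    (fun x => by simpa using ENNReal.Tendsto.mul_const hc1 (Or.inr (hμfin x)))
    fun n => h _ ?_ (Lll.const_mul hμfin (hc n).1.ne' (hc n).2)
  exact ENNReal.tsum_mul_left.trans_le (mul_le_one' (hc n).2.le hμ)
end

section
/- In the dcpo of countable-support sub-probability distributions on a countable set S ordered pointwise, the way-below relation satisfies: if μ has finite support and μ(x) < ν(x) for every x in the support of μ, then μ is way below ν (μ ≪ ν), i.e., for every directed set D with ν ≤ sup D there exists ρ ∈ D with μ ≤ ρ. -/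
open scoped ENNReal

/-! Each point `x` of the finite support of `μ` has `μ x < ν x ≤ sup_{ρ ∈ D} ρ x`, so some
`ρ ∈ D` already exceeds `μ` at `x`; directedness merges these finitely many witnesses into one. -/

theorem DirectedOn.exists_mem_forall_le_of_finite {S β : Type*} [Preorder β]
    {D : Set (S → β)} (hne : D.Nonempty) (hdir : DirectedOn (· ≤ ·) D)
    {μ : S → β} {T : Set S} (hT : T.Finite) (hμ : ∀ x ∈ T, ∃ ρ ∈ D, μ x ≤ ρ x) :
    ∃ ρ ∈ D, ∀ x ∈ T, μ x ≤ ρ x := by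
  choose g hgD hg using hμ
  have : Nonempty D := hne.to_subtype
  have : Finite T := hT
  obtain ⟨ρ, hρ⟩ := hdir.directed_val.finite_le fun x : T => (⟨g x x.2, hgD x x.2⟩ : D)
  exact ⟨ρ, ρ.2, fun x hx => (hg x hx).trans (hρ ⟨x, hx⟩ x)⟩

theorem stmt4_general {S : Type*} (μ ν : S → ℝ≥0∞)
    (hfin : (Function.support μ).Finite)
    (hlt : ∀ x, μ x ≠ 0 → μ x < ν x)
    (D : Set (S → ℝ≥0∞)) (hne : D.Nonempty)
    (hdir : DirectedOn (fun a b => ∀ x, a x ≤ b x) D)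
    (hle : ∀ x, ν x ≤ ⨆ ρ ∈ D, ρ x) :
    ∃ ρ ∈ D, ∀ x, μ x ≤ ρ x := by
  have hcover : ∀ x ∈ Function.support μ, ∃ ρ ∈ D, μ x ≤ ρ x := fun x hx =>
    let ⟨ρ, hρD, hρ⟩ := lt_biSup_iff.1 ((hlt x hx).trans_le (hle x))
    ⟨ρ, hρD, hρ.le⟩
  obtain ⟨ρ, hρD, hρ⟩ := DirectedOn.exists_mem_forall_le_of_finite hne hdir hfin hcover
  exact ⟨ρ, hρD, fun x => (eq_or_ne (μ x) 0).elim (fun hx => by simp [hx]) (hρ x)⟩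

/-- A finitely supported sub-distribution strictly below `ν` on its support is
way below `ν`. -/
theorem stmt4 {S : Type*} [Countable S] (μ ν : S → ℝ≥0∞)
    (hμ : SubDist μ) (hν : SubDist ν)
    (hfin : (Function.support μ).Finite)
    (hlt : ∀ x, μ x ≠ 0 → μ x < ν x)
    (D : Set (S → ℝ≥0∞)) (hne : D.Nonempty)
    (hdir : DirectedOn (fun a b => ∀ x, a x ≤ b x) D)
    (hsub : ∀ ρ ∈ D, SubDist ρ)
    (hle : ∀ x, ν x ≤ ⨆ ρ ∈ D, ρ x) :
    ∃ ρ ∈ D, ∀ x, μ x ≤ ρ x :=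
  stmt4_general μ ν hfin hlt D hne hdir hle
end

section
/- The dcpo of countable-support sub-probability distributions on a countable set S (ordered pointwise) is a continuous dcpo with a countable basis: every distribution ν is the directed supremum of the set of finitely-supported distributions μ with rational weights satisfying μ(x) < ν(x) on the support of μ, and each such μ is way below ν. -/
open scoped ENNReal

/-!
Everything is pointwise. Two approximants have their pointwise maximum as a common upper
bound, and the point masses `q • δₓ` with rational `q < ν x` alone already have supremum `ν x`
at `x`.
An approximant `μ` lies strictly below `ν ≤ ⨆ D` at each of the finitely many points of its
support, so each point is dominated by some member of `D`, and directedness of `D` merges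
these finitely many members into one.
-/

theorem DirectedOn.exists_mem_forall_le_of_lt_biSup {S α : Type*} [CompleteLinearOrder α]
    {D : Set (S → α)} (hD : DirectedOn (· ≤ ·) D) (hne : D.Nonempty) {μ : S → α} {s : Set S}
    (hs : s.Finite) (hμ : ∀ x ∈ s, μ x < ⨆ ρ ∈ D, ρ x) : ∃ ρ ∈ D, ∀ x ∈ s, μ x ≤ ρ x := by
  have hcover : (hs.toFinset : Set S) ⊆ ⋃ ρ ∈ D, {x | μ x ≤ ρ x} := by
    intro x hx
    obtain ⟨ρ, hρD, hlt⟩ := lt_biSup_iff.1 (hμ x (hs.mem_toFinset.1 hx))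
    exact Set.mem_biUnion hρD hlt.le
  have hDsub : DirectedOn (fun ρ σ : S → α => {x | μ x ≤ ρ x} ⊆ {x | μ x ≤ σ x}) D :=
    hD.mono fun ρ σ hρσ x (hx : μ x ≤ ρ x) => hx.trans (hρσ x)
  obtain ⟨ρ, hρD, hρ⟩ := hDsub.exists_mem_subset_of_finset_subset_biUnion hne hcover
  exact ⟨ρ, hρD, fun x hx => hρ (hs.mem_toFinset.2 hx)⟩

section

variable {S : Type*}

def IsNonnegRat (a : ℝ≥0∞) : Prop := ∃ q : ℚ, 0 ≤ q ∧ a = ENNReal.ofReal q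

theorem IsNonnegRat.sup {a b : ℝ≥0∞} (ha : IsNonnegRat a) (hb : IsNonnegRat b) :
    IsNonnegRat (a ⊔ b) := by
  obtain ⟨q, hq, rfl⟩ := ha
  obtain ⟨r, -, rfl⟩ := hb
  exact ⟨max q r, le_max_of_le_left hq, by rw [Rat.cast_max, ENNReal.ofReal_max]⟩

def ratApproximants (ν : S → ℝ≥0∞) : Set (S → ℝ≥0∞) :=
  {μ | μ.support.Finite ∧ (∀ x, IsNonnegRat (μ x)) ∧ ∀ x, μ x ≠ 0 → μ x < ν x}

variable {ν : S → ℝ≥0∞}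

theorem sup_mem_ratApproximants {a b : S → ℝ≥0∞} (ha : a ∈ ratApproximants ν)
    (hb : b ∈ ratApproximants ν) : a ⊔ b ∈ ratApproximants ν := by
  obtain ⟨ha_fin, ha_rat, ha_lt⟩ := ha
  obtain ⟨hb_fin, hb_rat, hb_lt⟩ := hb
  refine ⟨(ha_fin.union hb_fin).subset ?_, fun x => (ha_rat x).sup (hb_rat x), fun x hx => ?_⟩
  · refine Function.support_subset_iff'.2 fun x hx => ?_
    simp only [Set.mem_union, Function.mem_support, not_or, not_not] at hx
    simp [hx.1, hx.2]
  · rw [Pi.sup_apply] at hx ⊢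
    rcases max_choice (a x) (b x) with h | h <;> rw [h] at hx ⊢
    exacts [ha_lt x hx, hb_lt x hx]

theorem directedOn_ratApproximants : DirectedOn (· ≤ ·) (ratApproximants ν) :=
  fun a ha b hb => ⟨a ⊔ b, sup_mem_ratApproximants ha hb, le_sup_left, le_sup_right⟩

theorem single_mem_ratApproximants [DecidableEq S] {x : S} {q : ℚ} (hq : 0 ≤ q)
    (hqν : ENNReal.ofReal q < ν x) :
    Pi.single x (ENNReal.ofReal q) ∈ ratApproximants ν := by
  refine ⟨(Set.finite_singleton x).subset Pi.support_single_subset, fun y => ?_,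
    fun y hy => ?_⟩
  · by_cases h : y = x
    · exact ⟨q, hq, by simp [h]⟩
    · exact ⟨0, le_rfl, by simp [h]⟩
  · by_cases h : y = x
    · subst h; simpa using hqν
    · simp [h] at hy

theorem biSup_ratApproximants_apply (x : S) : ⨆ μ ∈ ratApproximants ν, μ x = ν x := by
  classical
  refine le_antisymm (iSup₂_le fun μ hμ => ?_) (le_of_forall_lt fun c hc => ?_)
  · by_cases h : μ x = 0
    · simp [h]
    · exact (hμ.2.2 x h).le
  · obtain ⟨q, hq, hcq, hqν⟩ := ENNReal.lt_iff_exists_rat_btwn.1 hc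
    refine hcq.trans_le (le_iSup₂_of_le (f := fun μ _ => μ x) _
      (single_mem_ratApproximants hq hqν) (by simp [ENNReal.ofReal]))

theorem exists_mem_le_of_mem_ratApproximants {μ : S → ℝ≥0∞} (hμ : μ ∈ ratApproximants ν)
    {D : Set (S → ℝ≥0∞)} (hne : D.Nonempty) (hD : DirectedOn (· ≤ ·) D)
    (hνD : ∀ x, ν x ≤ ⨆ ρ ∈ D, ρ x) : ∃ ρ ∈ D, μ ≤ ρ := by
  obtain ⟨hfin, -, hlt⟩ := hμ
  obtain ⟨ρ, hρD, hρ⟩ := hD.exists_mem_forall_le_of_lt_biSup hne hfin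
    fun x hx => (hlt x hx).trans_le (hνD x)
  refine ⟨ρ, hρD, fun x => ?_⟩
  by_cases h : μ x = 0
  · simp [h]
  · exact hρ x h

end

theorem stmt5_general {S : Type*} (ν : S → ℝ≥0∞) :
    DirectedOn (fun a b => ∀ x, a x ≤ b x)
      {μ : S → ℝ≥0∞ | (Function.support μ).Finite ∧
        (∀ x, ∃ q : ℚ, 0 ≤ q ∧ μ x = ENNReal.ofReal q) ∧
        ∀ x, μ x ≠ 0 → μ x < ν x} ∧
    (∀ x, ν x = ⨆ μ ∈ {μ : S → ℝ≥0∞ | (Function.support μ).Finite ∧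
        (∀ x, ∃ q : ℚ, 0 ≤ q ∧ μ x = ENNReal.ofReal q) ∧
        ∀ x, μ x ≠ 0 → μ x < ν x}, μ x) ∧
    (∀ μ ∈ {μ : S → ℝ≥0∞ | (Function.support μ).Finite ∧
        (∀ x, ∃ q : ℚ, 0 ≤ q ∧ μ x = ENNReal.ofReal q) ∧
        ∀ x, μ x ≠ 0 → μ x < ν x},
      ∀ D : Set (S → ℝ≥0∞), D.Nonempty →
        DirectedOn (fun a b => ∀ x, a x ≤ b x) D →
        (∀ ρ ∈ D, SubDist ρ) →
        (∀ x, ν x ≤ ⨆ ρ ∈ D, ρ x) →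
        ∃ ρ ∈ D, ∀ x, μ x ≤ ρ x) :=
  ⟨directedOn_ratApproximants, fun x => (biSup_ratApproximants_apply x).symm,
    fun _ hμ _ hne hD _ hνD => exists_mem_le_of_mem_ratApproximants hμ hne hD hνD⟩

/-- Continuity of the dcpo of sub-distributions: the finitely-supported
rational-weighted approximants strictly below `ν` form a directed set with
pointwise supremum `ν`, each member being way below `ν`. -/
theorem stmt5 {S : Type*} [Countable S] (ν : S → ℝ≥0∞) (hν : SubDist ν) :
    DirectedOn (fun a b => ∀ x, a x ≤ b x)
      {μ : S → ℝ≥0∞ | (Function.support μ).Finite ∧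
        (∀ x, ∃ q : ℚ, 0 ≤ q ∧ μ x = ENNReal.ofReal q) ∧
        ∀ x, μ x ≠ 0 → μ x < ν x} ∧
    (∀ x, ν x = ⨆ μ ∈ {μ : S → ℝ≥0∞ | (Function.support μ).Finite ∧
        (∀ x, ∃ q : ℚ, 0 ≤ q ∧ μ x = ENNReal.ofReal q) ∧
        ∀ x, μ x ≠ 0 → μ x < ν x}, μ x) ∧
    (∀ μ ∈ {μ : S → ℝ≥0∞ | (Function.support μ).Finite ∧
        (∀ x, ∃ q : ℚ, 0 ≤ q ∧ μ x = ENNReal.ofReal q) ∧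
        ∀ x, μ x ≠ 0 → μ x < ν x},
      ∀ D : Set (S → ℝ≥0∞), D.Nonempty →
        DirectedOn (fun a b => ∀ x, a x ≤ b x) D →
        (∀ ρ ∈ D, SubDist ρ) →
        (∀ x, ν x ≤ ⨆ ρ ∈ D, ρ x) →
        ∃ ρ ∈ D, ∀ x, μ x ≤ ρ x) :=
  stmt5_general ν
end

section
/- Probabilistic lifting is monotone with respect to the pointwise order on sub-distributions: if R is a preorder on a countable set S, then ≤ ; R̂ ; ≥ ⊆ R̂ fails in general, but the one-sided composition holds: if μ' ≤ μ, μ R̂ ν, and ν ≤ ν', then μ' R̂ ν'. -/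
open scoped ENNReal

theorem SubDist.ne_top {S : Type*} {μ : S → ℝ≥0∞} (hμ : SubDist μ) (x : S) : μ x ≠ ∞ :=
  ENNReal.ne_top_of_tsum_ne_top (ne_top_of_le_ne_top ENNReal.one_ne_top hμ) x

namespace Lift

variable {S : Type*} {R : S → S → Prop} {μ μ' ν ν' : S → ℝ≥0∞}

theorem mono_right (h : Lift R μ ν) (hν : ν ≤ ν') : Lift R μ ν' := by
  obtain ⟨m, hR, hrow, hcol⟩ := h
  exact ⟨m, hR, hrow, fun y => (hcol y).trans (hν y)⟩

/-- Row `x` of the matching is scaled by `μ' x / μ x ≤ 1`; finiteness of `μ` is what makes the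
rescaled row sum back to `μ' x`. -/
theorem mono_left (h : Lift R μ ν) (hμ' : μ' ≤ μ) (hμ : ∀ x, μ x ≠ ∞) : Lift R μ' ν := by
  obtain ⟨m, hR, hrow, hcol⟩ := h
  have hscale_le_one : ∀ x, μ' x / μ x ≤ 1 := fun x =>
    ENNReal.div_le_of_le_mul (by simpa using hμ' x)
  refine ⟨fun x y => m x y * (μ' x / μ x), ?_, ?_, ?_⟩
  · exact fun x y hm => hR x y (left_ne_zero_of_mul hm)
  · intro x
    rw [ENNReal.tsum_mul_right, hrow]
    exact ENNReal.mul_div_cancel' (fun h0 => le_antisymm (h0 ▸ hμ' x) bot_le)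
      (fun htop => absurd htop (hμ x))
  · intro y
    calc ∑' x, m x y * (μ' x / μ x) ≤ ∑' x, m x y :=
          ENNReal.tsum_le_tsum fun x => mul_le_of_le_one_right' (hscale_le_one x)
      _ ≤ ν y := hcol y

end Lift

theorem stmt6_general {S : Type*} (R : S → S → Prop)
    (μ' μ ν ν' : S → ℝ≥0∞)
    (hμ : SubDist μ)
    (h1 : ∀ x, μ' x ≤ μ x) (h2 : Lift R μ ν) (h3 : ∀ y, ν y ≤ ν' y) :
    Lift R μ' ν' :=
  (h2.mono_left h1 hμ.ne_top).mono_right h3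

/-- One-sided monotonicity of probabilistic lifting for a preorder `R`:
`μ' ≤ μ`, `μ R̂ ν` and `ν ≤ ν'` imply `μ' R̂ ν'`. -/
theorem stmt6 {S : Type*} [Countable S] (R : S → S → Prop)
    (hrefl : ∀ x, R x x) (htrans : ∀ x y z, R x y → R y z → R x z)
    (μ' μ ν ν' : S → ℝ≥0∞)
    (hμ' : SubDist μ') (hμ : SubDist μ) (hν : SubDist ν) (hν' : SubDist ν')
    (h1 : ∀ x, μ' x ≤ μ x) (h2 : Lift R μ ν) (h3 : ∀ y, ν y ≤ ν' y) :
    Lift R μ' ν' :=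
  stmt6_general R μ' μ ν ν' hμ h1 h2 h3
end

section
/- If R is a transitive relation on a countable set S, then its probabilistic lifting R̂ to sub-probability distributions is transitive: μ R̂ ν and ν R̂ ρ imply μ R̂ ρ. -/
/-!
Two matchings `m : μ → ν` and `m' : ν → ρ` compose by routing the mass `m x y` arriving at `y`
along the row of `m'` at `y`, normalised by its total mass `ν y`:
`m'' x z = ∑ y, m x y * m' y z / ν y`. Summing over `z` returns `m x y` because the rows of `m'`
sum to `ν y` (finite, and where it is `0` so is `m x y`), and summing over `x` gives at most
`m' y z` because the columns of `m` are bounded by `ν y`. A positive entry `m'' x z` needs some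
`y` with `m x y ≠ 0` and `m' y z ≠ 0`, so `R x y` and `R y z`, hence `R x z`.
-/

open scoped ENNReal

theorem SubDist.ne_top_s7 {S : Type*} {ν : S → ℝ≥0∞} (hν : SubDist ν) (y : S) : ν y ≠ ∞ :=
  ne_top_of_le_ne_top ENNReal.one_ne_top ((ENNReal.le_tsum y).trans hν)

namespace Lift

variable {S : Type*}

noncomputable def compMatching (m m' : S → S → ℝ≥0∞) (ν : S → ℝ≥0∞) : S → S → ℝ≥0∞ :=
  fun x z => ∑' y, m x y * m' y z / ν y

variable {m m' : S → S → ℝ≥0∞} {ν : S → ℝ≥0∞}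

theorem exists_of_compMatching_ne_zero {x z : S} (h : compMatching m m' ν x z ≠ 0) :
    ∃ y, m x y ≠ 0 ∧ m' y z ≠ 0 := by
  obtain ⟨y, hy⟩ : ∃ y, m x y * m' y z / ν y ≠ 0 := by
    by_contra! hall
    exact h (ENNReal.tsum_eq_zero.mpr hall)
  exact ⟨y, fun h0 => hy (by simp [h0]), fun h0 => hy (by simp [h0])⟩

theorem tsum_compMatching_row (hν : ∀ y, ν y ≠ ∞) (hcol : ∀ y, ∑' x, m x y ≤ ν y)
    (hrow' : ∀ y, ∑' z, m' y z = ν y) (x : S) :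
    ∑' z, compMatching m m' ν x z = ∑' y, m x y := by
  unfold compMatching
  rw [ENNReal.tsum_comm]
  congr 1
  funext y
  by_cases h0 : ν y = 0
  · have : m x y = 0 := nonpos_iff_eq_zero.mp (h0 ▸ (ENNReal.le_tsum x).trans (hcol y))
    simp [this]
  · simp_rw [div_eq_mul_inv, mul_assoc, ENNReal.tsum_mul_left, ENNReal.tsum_mul_right, hrow' y,
      ENNReal.mul_inv_cancel h0 (hν y), mul_one]

theorem tsum_compMatching_col_le (hν : ∀ y, ν y ≠ ∞) (hcol : ∀ y, ∑' x, m x y ≤ ν y) (z : S) :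
    ∑' x, compMatching m m' ν x z ≤ ∑' y, m' y z := by
  unfold compMatching
  rw [ENNReal.tsum_comm]
  calc ∑' y, ∑' x, m x y * m' y z / ν y
      = ∑' y, (∑' x, m x y) * (m' y z / ν y) := by
        simp_rw [mul_div_assoc, ENNReal.tsum_mul_right]
    _ ≤ ∑' y, ν y * (m' y z / ν y) := ENNReal.tsum_le_tsum fun y => mul_le_mul_left (hcol y) _
    _ ≤ ∑' y, m' y z := ENNReal.tsum_le_tsum fun y => by
        by_cases h0 : ν y = 0
        · simp [h0]
        · rw [ENNReal.mul_div_cancel h0 (hν y)]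

theorem comp {R R' : S → S → Prop} {μ ρ : S → ℝ≥0∞} (hν : ∀ y, ν y ≠ ∞)
    (h : Lift R μ ν) (h' : Lift R' ν ρ) : Lift (Relation.Comp R R') μ ρ := by
  obtain ⟨m, hmR, hrow, hcol⟩ := h
  obtain ⟨m', hmR', hrow', hcol'⟩ := h'
  refine ⟨compMatching m m' ν, fun x z hxz => ?_, fun x => ?_, fun z => ?_⟩
  · obtain ⟨y, hxy, hyz⟩ := exists_of_compMatching_ne_zero hxz
    exact ⟨y, hmR x y hxy, hmR' y z hyz⟩
  · rw [tsum_compMatching_row hν hcol hrow', hrow]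
  · exact (tsum_compMatching_col_le hν hcol z).trans (hcol' z)

theorem mono {R R' : S → S → Prop} {μ : S → ℝ≥0∞} (hR : ∀ x y, R x y → R' x y)
    (h : Lift R μ ν) : Lift R' μ ν := by
  obtain ⟨m, hmR, hrow, hcol⟩ := h
  exact ⟨m, fun x y hxy => hR x y (hmR x y hxy), hrow, hcol⟩

end Lift

theorem stmt7_general {S : Type*} (R : S → S → Prop)
    (htrans : ∀ x y z, R x y → R y z → R x z)
    (μ ν ρ : S → ℝ≥0∞) (hν : SubDist ν)
    (h1 : Lift R μ ν) (h2 : Lift R ν ρ) : Lift R μ ρ :=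
  (h1.comp hν.ne_top_s7 h2).mono fun x z ⟨y, hxy, hyz⟩ => htrans x y z hxy hyz

/-- The probabilistic lifting of a transitive relation is transitive. -/
theorem stmt7 {S : Type*} [Countable S] (R : S → S → Prop)
    (htrans : ∀ x y z, R x y → R y z → R x z)
    (μ ν ρ : S → ℝ≥0∞) (hμ : SubDist μ) (hν : SubDist ν) (hρ : SubDist ρ)
    (h1 : Lift R μ ν) (h2 : Lift R ν ρ) : Lift R μ ρ :=
  stmt7_general R htrans μ ν ρ hν h1 h2
end

section
/- The probabilistic lifting of a relation is linear with respect to sub-convex combinations: if R is a relation on a countable set S, (μ_i) and (ν_i) are countable families of sub-distributions with μ_i R̂ ν_i for all i, and (p_i) are nonnegative weights with Σ_i p_i ≤ 1, then Σ_i p_i·μ_i R̂ Σ_i p_i·ν_i (assuming both sums are sub-distributions). -/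
open scoped ENNReal

theorem Lift.const_mul {S : Type*} {R : S → S → Prop} {μ ν : S → ℝ≥0∞} (c : ℝ≥0∞)
    (h : Lift R μ ν) : Lift R (fun x => c * μ x) (fun x => c * ν x) := by
  obtain ⟨m, hR, hμ, hν⟩ := h
  refine ⟨fun x y => c * m x y, fun x y hne => hR x y (right_ne_zero_of_mul hne), ?_, ?_⟩
  · intro x
    rw [ENNReal.tsum_mul_left, hμ]
  · intro y
    rw [ENNReal.tsum_mul_left]
    exact mul_le_mul_right (hν y) c

theorem Lift.tsum {S ι : Type*} {R : S → S → Prop} {μ ν : ι → S → ℝ≥0∞}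
    (h : ∀ i, Lift R (μ i) (ν i)) :
    Lift R (fun x => ∑' i, μ i x) (fun x => ∑' i, ν i x) := by
  choose m hR hμ hν using h
  refine ⟨fun x y => ∑' i, m i x y, ?_, ?_, ?_⟩
  · intro x y hne
    obtain ⟨i, hi⟩ := not_forall.mp (mt ENNReal.tsum_eq_zero.mpr hne)
    exact hR i x y hi
  · intro x
    rw [ENNReal.tsum_comm]
    exact tsum_congr (hμ · x)
  · intro y
    rw [ENNReal.tsum_comm]
    exact ENNReal.tsum_le_tsum (hν · y)

theorem stmt9_general {S ι : Type*} (R : S → S → Prop)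
    (μ ν : ι → S → ℝ≥0∞) (p : ι → ℝ≥0∞)
    (h : ∀ i, Lift R (μ i) (ν i)) :
    Lift R (fun x => ∑' i, p i * μ i x) (fun x => ∑' i, p i * ν i x) :=
  Lift.tsum fun i => (h i).const_mul (p i)

/-- Probabilistic lifting is linear with respect to countable sub-convex
combinations. -/
theorem stmt9 {S ι : Type*} [Countable S] [Countable ι] (R : S → S → Prop)
    (μ ν : ι → S → ℝ≥0∞) (p : ι → ℝ≥0∞)
    (hp : ∑' i, p i ≤ 1)
    (hμ : ∀ i, SubDist (μ i)) (hν : ∀ i, SubDist (ν i))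
    (hμc : SubDist (fun x => ∑' i, p i * μ i x))
    (hνc : SubDist (fun x => ∑' i, p i * ν i x))
    (h : ∀ i, Lift R (μ i) (ν i)) :
    Lift R (fun x => ∑' i, p i * μ i x) (fun x => ∑' i, p i * ν i x) :=
  stmt9_general R μ ν p h
end

section
/- Under the same abstract hypotheses (B countable, c ≪' a ⟹ c ⪯ a; c ⪯ d ≪' a ⪯ b ⟹ c ≪' b; interpolation c ≪' a ⟹ ∃ d, c ≪' d ≪' a; and a ⪯ b ⟺ ∀ c ∈ B, c ≪' a ⟹ c ≪' b), the topology on the quotient X/≈ (where ≈ = ⪯ ∩ ⪰) generated by subbasic open sets ⇈c = {a : c ≪' a} and their 'complements' X ∖ ↑c = {a : ¬(c ⪯ a)} for c ∈ B, is second countable and Hausdorff. -/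
/-!
If `[a] ≠ [b]`, say `a ⋠ b`, then the characterisation of `⪯` through approximants gives
`c ≪' a` with `¬ c ≪' b`; interpolating `c ≪' d ≪' a` yields `d ∈ B` with `d ≪' a` and `d ⋠ b`
(otherwise `c ≪' b` again). The subbasic opens `⇈d ∋ [a]` and `X ∖ ↑d ∋ [b]` are disjoint
because `⇈d ⊆ ↑d`. Second countability holds since the subbasis is indexed by the countable `B`.
-/

open TopologicalSpace

lemma t2Space_of_not_le_separated {α : Type*} [PartialOrder α] [TopologicalSpace α]
    (h : ∀ a b : α, ¬ a ≤ b → ∃ u v : Set α, IsOpen u ∧ IsOpen v ∧ a ∈ u ∧ b ∈ v ∧ Disjoint u v) :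
    T2Space α := by
  refine ⟨fun a b hab => ?_⟩
  rcases hab.not_le_or_not_ge with hab | hba
  · exact h a b hab
  · obtain ⟨u, v, hu, hv, hbu, hav, huv⟩ := h b a hba
    exact ⟨v, u, hv, hu, hav, hbu, huv.symm⟩

lemma exists_approx_not_le {X : Type*} [Preorder X] {B : Set X} {lll : X → X → Prop}
    (interp : ∀ c a, c ∈ B → lll c a → ∃ d ∈ B, lll c d ∧ lll d a)
    (le_iff : ∀ a b : X, a ≤ b ↔ ∀ c ∈ B, lll c a → lll c b) {a b : X} (hab : ¬ a ≤ b) :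
    ∃ d ∈ B, lll d a ∧ ¬ d ≤ b := by
  obtain ⟨c, hcB, hca, hcb⟩ : ∃ c ∈ B, lll c a ∧ ¬ lll c b := by
    simpa [le_iff a b] using hab
  obtain ⟨d, hdB, hcd, hda⟩ := interp c a hcB hca
  exact ⟨d, hdB, hda, fun hdb => hcb ((le_iff d b).1 hdb c hcB hcd)⟩

theorem stmt13_general {X : Type*} [Preorder X] (B : Set X) (hB : B.Countable)
    (lll : X → X → Prop)
    (h1 : ∀ c a, c ∈ B → lll c a → c ≤ a)
    (h3 : ∀ c a, c ∈ B → lll c a → ∃ d ∈ B, lll c d ∧ lll d a)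
    (h4 : ∀ a b : X, a ≤ b ↔ ∀ c ∈ B, lll c a → lll c b) :
    let Q := Antisymmetrization X (· ≤ ·)
    let mk : X → Q := toAntisymmetrization (· ≤ ·)
    let dup : X → Set Q := fun c => {q | ∃ a : X, mk a = q ∧ lll c a}
    let up : X → Set Q := fun c => {q | ∃ a : X, mk a = q ∧ c ≤ a}
    let T : TopologicalSpace Q :=
      TopologicalSpace.generateFrom ((dup '' B) ∪ ((fun c => (up c)ᶜ) '' B))
    @SecondCountableTopology Q T ∧ @T2Space Q T := by
  intro Q mk dup up T
  refine ⟨⟨_, (hB.image _).union (hB.image _), rfl⟩, @t2Space_of_not_le_separated Q _ T ?_⟩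
  intro p q hpq
  induction p using Antisymmetrization.ind with | _ a => ?_
  induction q using Antisymmetrization.ind with | _ b => ?_
  obtain ⟨d, hdB, hda, hdb⟩ :=
    exists_approx_not_le h3 h4 (toAntisymmetrization_le_toAntisymmetrization_iff.not.1 hpq)
  have dup_subset_up : dup d ⊆ up d := fun _ ⟨x, hx, hdx⟩ => ⟨x, hx, h1 d x hdB hdx⟩
  refine ⟨dup d, (up d)ᶜ, .basic _ (.inl ⟨d, hdB, rfl⟩), .basic _ (.inr ⟨d, hdB, rfl⟩),
    ⟨a, rfl, hda⟩, ?_, Set.disjoint_compl_right_iff_subset.2 dup_subset_up⟩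
  rintro ⟨x, hx, hdx⟩
  exact hdb (hdx.trans (toAntisymmetrization_le_toAntisymmetrization_iff.1 hx.le))

/-- The Lawson-style topology on the quotient of `X` by the equivalence induced
by the preorder, generated by the subbasic sets `⇈c` and the complements of
`↑c` for `c` in the countable basis `B`, is second countable and Hausdorff. -/
theorem stmt13 {X : Type*} [Preorder X] (B : Set X) (hB : B.Countable)
    (lll : X → X → Prop)
    (h1 : ∀ c a, c ∈ B → lll c a → c ≤ a)
    (h2 : ∀ c d a b, c ∈ B → d ∈ B → c ≤ d → lll d a → a ≤ b → lll c b)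
    (h3 : ∀ c a, c ∈ B → lll c a → ∃ d ∈ B, lll c d ∧ lll d a)
    (h4 : ∀ a b : X, a ≤ b ↔ ∀ c ∈ B, lll c a → lll c b) :
    let Q := Antisymmetrization X (· ≤ ·)
    let mk : X → Q := toAntisymmetrization (· ≤ ·)
    let dup : X → Set Q := fun c => {q | ∃ a : X, mk a = q ∧ lll c a}
    let up : X → Set Q := fun c => {q | ∃ a : X, mk a = q ∧ c ≤ a}
    let T : TopologicalSpace Q :=
      TopologicalSpace.generateFrom ((dup '' B) ∪ ((fun c => (up c)ᶜ) '' B))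
    @SecondCountableTopology Q T ∧ @T2Space Q T :=
  stmt13_general B hB lll h1 h3 h4
end

section
/- Under the abstract approximation hypotheses, the Lawson-style topology on X/≈ is regular: every subbasic open set containing a point contains a closed neighborhood of the point. Specifically, if [a] ∈ ⇈c then by interpolation there is d ∈ B with c ≪' d ≪' a and [a] ∈ ⇈d ⊆ ↑d ⊆ ⇈c; if [a] ∈ (X/≈) ∖ ↑c then the closed set (X/≈) ∖ ⇈c works provided ↓-closedness holds. -/
/-!
Around a point of a subbasic open set `⇈c` we interpolate `c ≪' d ≪' a` and use
`⇈d ⊆ ↑d ⊆ ⇈c`. Around a point `[a]` of `(↑c)ᶜ`, the inclusion order detects `¬ c ⪯ a` by some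
`e ≪' c` with `¬ e ≪' a`; interpolating `e ≪' f ≪' c` gives `[a] ∈ (↑f)ᶜ ⊆ (⇈f)ᶜ ⊆ (↑c)ᶜ`.
-/

namespace ApproximationLawson

open Topology

variable {X : Type*} [Preorder X]

def wayUpSet (lll : X → X → Prop) (c : X) : Set (Antisymmetrization X (· ≤ ·)) :=
  {q | ∃ a : X, toAntisymmetrization (· ≤ ·) a = q ∧ lll c a}

def upSet (c : X) : Set (Antisymmetrization X (· ≤ ·)) :=
  {q | ∃ a : X, toAntisymmetrization (· ≤ ·) a = q ∧ c ≤ a}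

abbrev lawsonTopology (B : Set X) (lll : X → X → Prop) :
    TopologicalSpace (Antisymmetrization X (· ≤ ·)) :=
  .generateFrom (wayUpSet lll '' B ∪ (fun c => (upSet c)ᶜ) '' B)

theorem mem_upSet_iff {c a : X} : toAntisymmetrization (· ≤ ·) a ∈ upSet c ↔ c ≤ a := by
  refine ⟨fun ⟨b, hba, hcb⟩ => hcb.trans ?_, fun h => ⟨a, rfl, h⟩⟩
  exact toAntisymmetrization_le_toAntisymmetrization_iff.1 hba.le

variable {B : Set X} {lll : X → X → Prop} {c d : X} {p : Antisymmetrization X (· ≤ ·)}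

theorem isOpen_wayUpSet (hc : c ∈ B) : IsOpen[lawsonTopology B lll] (wayUpSet lll c) :=
  TopologicalSpace.isOpen_generateFrom_of_mem (.inl ⟨c, hc, rfl⟩)

theorem isOpen_compl_upSet (hc : c ∈ B) : IsOpen[lawsonTopology B lll] (upSet c)ᶜ :=
  TopologicalSpace.isOpen_generateFrom_of_mem (.inr ⟨c, hc, rfl⟩)

theorem isClosed_upSet (hc : c ∈ B) : IsClosed[lawsonTopology B lll] (upSet c) :=
  letI := lawsonTopology B lll
  isOpen_compl_iff.1 (isOpen_compl_upSet hc)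

theorem isClosed_compl_wayUpSet (hc : c ∈ B) :
    IsClosed[lawsonTopology B lll] (wayUpSet lll c)ᶜ :=
  letI := lawsonTopology B lll
  isClosed_compl_iff.2 (isOpen_wayUpSet hc)

theorem wayUpSet_subset_upSet (hle : ∀ a, lll c a → c ≤ a) : wayUpSet lll c ⊆ upSet c :=
  fun _ ⟨a, ha, hca⟩ => ⟨a, ha, hle a hca⟩

theorem upSet_subset_wayUpSet (hmono : ∀ a b, lll c a → a ≤ b → lll c b) (hcd : lll c d) :
    upSet d ⊆ wayUpSet lll c :=
  fun _ ⟨b, hb, hdb⟩ => ⟨b, hb, hmono d b hcd hdb⟩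

theorem exists_lll_not_lll_of_not_le {a : X}
    (hle : ∀ a b : X, (∀ c ∈ B, lll c a → lll c b) → a ≤ b) (h : ¬ c ≤ a) :
    ∃ e ∈ B, lll e c ∧ ¬ lll e a := by
  by_contra! hall
  exact h (hle c a hall)

theorem exists_closed_nhd_of_mem_wayUpSet (h1 : ∀ c a, c ∈ B → lll c a → c ≤ a)
    (hmono : ∀ c a b, c ∈ B → lll c a → a ≤ b → lll c b)
    (h3 : ∀ c a, c ∈ B → lll c a → ∃ d ∈ B, lll c d ∧ lll d a)
    (hc : c ∈ B) (hp : p ∈ wayUpSet lll c) :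
    ∃ V C, IsOpen[lawsonTopology B lll] V ∧ IsClosed[lawsonTopology B lll] C ∧
      p ∈ V ∧ V ⊆ C ∧ C ⊆ wayUpSet lll c := by
  obtain ⟨a, rfl, hca⟩ := hp
  obtain ⟨d, hd, hcd, hda⟩ := h3 c a hc hca
  exact ⟨wayUpSet lll d, upSet d, isOpen_wayUpSet hd, isClosed_upSet hd, ⟨a, rfl, hda⟩,
    wayUpSet_subset_upSet (h1 d · hd), upSet_subset_wayUpSet (hmono c · · hc) hcd⟩

theorem exists_closed_nhd_of_mem_compl_upSet (h1 : ∀ c a, c ∈ B → lll c a → c ≤ a)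
    (hmono : ∀ c a b, c ∈ B → lll c a → a ≤ b → lll c b)
    (h3 : ∀ c a, c ∈ B → lll c a → ∃ d ∈ B, lll c d ∧ lll d a)
    (hle : ∀ a b : X, (∀ c ∈ B, lll c a → lll c b) → a ≤ b)
    (hp : p ∈ (upSet c)ᶜ) :
    ∃ V C, IsOpen[lawsonTopology B lll] V ∧ IsClosed[lawsonTopology B lll] C ∧
      p ∈ V ∧ V ⊆ C ∧ C ⊆ (upSet c)ᶜ := by
  induction p using Antisymmetrization.induction_on with | _ a
  obtain ⟨e, he, hec, hea⟩ := exists_lll_not_lll_of_not_le hle (mem_upSet_iff.not.1 hp)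
  obtain ⟨f, hf, hef, hfc⟩ := h3 e c he hec
  have hfa : toAntisymmetrization (· ≤ ·) a ∉ upSet f :=
    fun hfa => hea (hmono e f a he hef (mem_upSet_iff.1 hfa))
  exact ⟨(upSet f)ᶜ, (wayUpSet lll f)ᶜ, isOpen_compl_upSet hf, isClosed_compl_wayUpSet hf, hfa,
    Set.compl_subset_compl.2 (wayUpSet_subset_upSet (h1 f · hf)),
    Set.compl_subset_compl.2 (upSet_subset_wayUpSet (hmono f · · hf) hfc)⟩

end ApproximationLawson

open ApproximationLawson in
theorem stmt15_general {X : Type*} [Preorder X] (B : Set X)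
    (lll : X → X → Prop)
    (h1 : ∀ c a, c ∈ B → lll c a → c ≤ a)
    (h2 : ∀ c d a b, c ∈ B → d ∈ B → c ≤ d → lll d a → a ≤ b → lll c b)
    (h3 : ∀ c a, c ∈ B → lll c a → ∃ d ∈ B, lll c d ∧ lll d a)
    (h4 : ∀ a b : X, a ≤ b ↔ ∀ c ∈ B, lll c a → lll c b) :
    let Q := Antisymmetrization X (· ≤ ·)
    let mk : X → Q := toAntisymmetrization (· ≤ ·)
    let dup : X → Set Q := fun c => {q | ∃ a : X, mk a = q ∧ lll c a}
    let up : X → Set Q := fun c => {q | ∃ a : X, mk a = q ∧ c ≤ a}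
    let T : TopologicalSpace Q :=
      TopologicalSpace.generateFrom ((dup '' B) ∪ ((fun c => (up c)ᶜ) '' B))
    ∀ U ∈ (dup '' B) ∪ ((fun c => (up c)ᶜ) '' B), ∀ p ∈ U,
      ∃ V C : Set Q, @IsOpen Q T V ∧ @IsClosed Q T C ∧
        p ∈ V ∧ V ⊆ C ∧ C ⊆ U := by
  intro Q mk dup up T U hU p hp
  have hmono : ∀ c a b, c ∈ B → lll c a → a ≤ b → lll c b :=
    fun c a b hc => h2 c c a b hc hc le_rfl
  rcases hU with ⟨c, hc, rfl⟩ | ⟨c, -, rfl⟩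
  · exact exists_closed_nhd_of_mem_wayUpSet h1 hmono h3 hc hp
  · exact exists_closed_nhd_of_mem_compl_upSet h1 hmono h3 (fun a b => (h4 a b).2) hp

/-- Regularity of the Lawson-style topology on the quotient: every subbasic
open set containing a point contains a closed neighborhood of that point. -/
theorem stmt15 {X : Type*} [Preorder X] (B : Set X) (hB : B.Countable)
    (lll : X → X → Prop)
    (h1 : ∀ c a, c ∈ B → lll c a → c ≤ a)
    (h2 : ∀ c d a b, c ∈ B → d ∈ B → c ≤ d → lll d a → a ≤ b → lll c b)
    (h3 : ∀ c a, c ∈ B → lll c a → ∃ d ∈ B, lll c d ∧ lll d a)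
    (h4 : ∀ a b : X, a ≤ b ↔ ∀ c ∈ B, lll c a → lll c b) :
    let Q := Antisymmetrization X (· ≤ ·)
    let mk : X → Q := toAntisymmetrization (· ≤ ·)
    let dup : X → Set Q := fun c => {q | ∃ a : X, mk a = q ∧ lll c a}
    let up : X → Set Q := fun c => {q | ∃ a : X, mk a = q ∧ c ≤ a}
    let T : TopologicalSpace Q :=
      TopologicalSpace.generateFrom ((dup '' B) ∪ ((fun c => (up c)ᶜ) '' B))
    ∀ U ∈ (dup '' B) ∪ ((fun c => (up c)ᶜ) '' B), ∀ p ∈ U,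
      ∃ V C : Set Q, @IsOpen Q T V ∧ @IsClosed Q T C ∧
        p ∈ V ∧ V ⊆ C ∧ C ⊆ U :=
  stmt15_general B lll h1 h2 h3 h4
end
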